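/- Let κ > 0, d > 0, T > 0 and suppose 0 < Γ < (1/(2κd)) · log((1 + e^{2κdT})/2). Then Γ < T and (coth(κ d (T − Γ)) − 1)/(coth(κ d Γ) + 1) < 1. -/

import Mathlib

noncomputable def coth (x : ℝ) : ℝ := Real.cosh x / Real.sinh x

/-! With `x = κdΓ` and `y = κd(T - Γ)` the ratio equals `(e^{2x} - 1) / (e^{2x} (e^{2y} - 1))`, so it is
below `1` exactly when `2 e^{2κdΓ} - 1 < e^{2κdT}`; exponentiating the bound on `Γ` gives precisely this. -/

open Real

lemma coth_sub_one {x : ℝ} (hx : x ≠ 0) : coth x - 1 = exp (-x) / sinh x := by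
  rw [coth, div_sub_one (sinh_ne_zero.2 hx), cosh_sub_sinh]

lemma coth_add_one {x : ℝ} (hx : x ≠ 0) : coth x + 1 = exp x / sinh x := by
  rw [coth, div_add_one (sinh_ne_zero.2 hx), cosh_add_sinh]

lemma coth_sub_one_div_coth_add_one {x y : ℝ} (hx : x ≠ 0) (hy : y ≠ 0) :
    (coth y - 1) / (coth x + 1) = (exp (2 * x) - 1) / (exp (2 * x) * (exp (2 * y) - 1)) := by
  have hsx := sinh_ne_zero.2 hx
  have hsy := sinh_ne_zero.2 hy
  have hey : exp (2 * y) - 1 ≠ 0 := by simpa [sub_eq_zero] using hy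
  rw [coth_sub_one hy, coth_add_one hx, sinh_eq, sinh_eq]
  have h2x : exp (2 * x) = exp x ^ 2 := by rw [← exp_nat_mul]; norm_num
  have h2y : exp (2 * y) = exp y ^ 2 := by rw [← exp_nat_mul]; norm_num
  rw [h2x, h2y] at *
  rw [exp_neg, exp_neg]
  field_simp

lemma coth_sub_one_div_coth_add_one_lt_one_iff {x y : ℝ} (hx : x ≠ 0) (hy : 0 < y) :
    (coth y - 1) / (coth x + 1) < 1 ↔ 2 * exp (2 * x) - 1 < exp (2 * (x + y)) := by
  have hden : 0 < exp (2 * x) * (exp (2 * y) - 1) :=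
    mul_pos (exp_pos _) (sub_pos.2 (one_lt_exp_iff.2 (by linarith)))
  rw [coth_sub_one_div_coth_add_one hx hy.ne', div_lt_one hden, mul_add, exp_add]
  constructor <;> intro h <;> linarith

lemma lt_log_one_add_exp_div_two_iff {c Γ T : ℝ} (hc : 0 < c) :
    Γ < 1 / (2 * c) * log ((1 + exp (2 * c * T)) / 2) ↔ 2 * exp (2 * c * Γ) - 1 < exp (2 * c * T) := by
  rw [one_div_mul_eq_div, lt_div_iff₀' (by positivity), lt_log_iff_exp_lt (by positivity)]
  constructor <;> intro h <;> linarith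

theorem S2AS1_convergence_general {κ d T Γ : ℝ} (hκ : 0 < κ) (hd : 0 < d)
    (hΓ : 0 < Γ)
    (hΓbound : Γ < (1 / (2 * κ * d)) * Real.log ((1 + Real.exp (2 * κ * d * T)) / 2)) :
    Γ < T ∧ (coth (κ * d * (T - Γ)) - 1) / (coth (κ * d * Γ) + 1) < 1 := by
  have hc : 0 < κ * d := mul_pos hκ hd
  simp only [mul_assoc 2 κ d] at hΓbound
  have hexp := (lt_log_one_add_exp_div_two_iff hc).1 hΓbound
  have hΓT : Γ < T := by
    have : exp (2 * (κ * d) * Γ) < exp (2 * (κ * d) * T) := by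
      linarith [one_lt_exp_iff.2 (by positivity : 0 < 2 * (κ * d) * Γ)]
    exact lt_of_mul_lt_mul_left (exp_lt_exp.1 this) (by positivity)
  refine ⟨hΓT, (coth_sub_one_div_coth_add_one_lt_one_iff (by positivity) ?_).2 ?_⟩
  · exact mul_pos hc (sub_pos.2 hΓT)
  · convert hexp using 2 <;> ring_nf

theorem S2AS1_convergence {κ d T Γ : ℝ} (hκ : 0 < κ) (hd : 0 < d) (hT : 0 < T)
    (hΓ : 0 < Γ)
    (hΓbound : Γ < (1 / (2 * κ * d)) * Real.log ((1 + Real.exp (2 * κ * d * T)) / 2)) :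
    Γ < T ∧ (coth (κ * d * (T - Γ)) - 1) / (coth (κ * d * Γ) + 1) < 1 :=
  S2AS1_convergence_general hκ hd hΓ hΓbound
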